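/- Let Q be a finite loop-free quiver with a gentle system of relations R that is cyclically closed. Let β₁,…,β_{m−1} (with m ≥ 2) be arrows forming a path, i.e., t(β_i) = s(β_{i+1}) for 1 ≤ i ≤ m−2, with (β_i, β_{i+1}) ∉ R for 1 ≤ i ≤ m−2, and let β_m, β_{m+1} be arrows, both not in {β₁, β_{m−1}}, with t(β_m) = s(β_{m+1}), (β_m, β_{m+1}) ∉ R, s(β_m) = s(β₁), t(β_{m+1}) = t(β_{m−1}), and such that the only arrows of Q whose source or target is the vertex t(β_m) = s(β_{m+1}) are β_m and β_{m+1} (so β₁,…,β_{m−1} together with β_m, β_{m+1} form an almost bypass). Set j_k := s(β_k) for 1 ≤ k ≤ m−1 and j_m := t(β_{m−1}), and let b_j denote the j-th column of the signed adjacency matrix B of Q and e_j ∈ ℤ^{Q₀} the j-th standard basis vector. Then Σ_{k=1}^{m} b_{j_k} = e_{j_m} − e_{j_1} in ℤ^{Q₀}. -/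

import Mathlib

/-!
Write `jₖ` for the vertices of the path and `w = t(β_m)`. Each path arrow `βₖ` leaves `jₖ` and
enters `jₖ₊₁`, contributing `e_{jₖ₊₁} - e_{jₖ}` to the sum, which telescopes to `e_{jₘ} - e_{j₁}`;
`β_m` and `β_{m+1}` contribute `e_w - e_w = 0`. By gentleness every other arrow entering `jₖ`
composes with `βₖ` to a relation `γ βₖ`, every other arrow leaving `jₖ₊₁` to a relation `βₖ δ`,
and each kind is unique; cyclic closedness puts `γ, βₖ, δ` on a 3-cycle, so `s γ = t δ` and the
two contributions cancel. At `j₁` and `jₘ` the same description holds because a 3-cycle through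
`β_m` or `β_{m+1}` would need a third arrow at the isolated vertex `w`.
-/

open Finset

theorem sum_Icc_eq_sub_of_two_step_telescope {G : Type*} [AddCommGroup G] {n : ℕ} (hn : 1 ≤ n)
    (f y p : ℕ → G) (c : G)
    (h_first : f 1 = y 2 - p 1 + c)
    (h_mid : ∀ k, 2 ≤ k → k ≤ n → f k = y (k + 1) - y (k - 1) + p (k - 1) - p k)
    (h_last : f (n + 1) = p n - y n - c) :
    ∑ k ∈ Icc 1 (n + 1), f k = y (n + 1) - y 1 := by
  have partial_sum : ∀ N, 1 ≤ N → N ≤ n →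
      ∑ k ∈ Icc 1 N, f k = y (N + 1) + y N - y 1 - p N + c := by
    intro N hN
    induction N, hN using Nat.le_induction with
    | base => simp [h_first]
    | succ N hN ih =>
      intro hNn
      rw [sum_Icc_succ_top (by omega), ih (by omega), h_mid (N + 1) (by omega) hNn]
      simp only [Nat.add_sub_cancel]
      abel
  rw [sum_Icc_succ_top (by omega), partial_sum n hn le_rfl, h_last]
  abel

theorem Finset.filter_univ_eq_pair_of_ncard_le_two {α : Type*} [Fintype α] [DecidableEq α]
    {p : α → Prop} [DecidablePred p] (hp : {a | p a}.ncard ≤ 2) {x y : α} (hxy : x ≠ y)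
    (hx : p x) (hy : p y) : ({a | p a} : Finset α) = {x, y} := by
  refine (eq_of_subset_of_card_le (fun a ha => ?_) ?_).symm
  · rcases mem_insert.1 ha with rfl | ha
    · simpa using hx
    · simpa [mem_singleton.1 ha] using hy
  · rwa [card_pair hxy, ← Set.ncard_coe_finset, coe_filter_univ]

section Gentle

variable {V E : Type*}

noncomputable def signedAdjMatrix (s t : E → V) : Matrix V V ℤ := fun i j =>
  ({a : E | s a = j ∧ t a = i}.ncard : ℤ) - ({a : E | s a = i ∧ t a = j}.ncard : ℤ)

theorem signedAdjMatrix_col [Fintype E] [DecidableEq V] (s t : E → V) (v : V) :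
    (fun i => signedAdjMatrix s t i v) =
      ∑ a ∈ {a | s a = v}, Pi.single (t a) 1 - ∑ a ∈ {a | t a = v}, Pi.single (s a) 1 := by
  ext i
  simp only [signedAdjMatrix, Pi.sub_apply, Finset.sum_apply, Pi.single_apply, sum_boole,
    filter_filter, eq_comm (a := i)]
  rw [← Set.ncard_coe_finset, ← Set.ncard_coe_finset, coe_filter_univ, coe_filter_univ]
  simp only [and_comm (a := s _ = i)]

structure IsGentleQP (s t : E → V) (R : E → E → Prop) : Prop where
  comp : ∀ a b, R a b → t a = s b
  card_source_le : ∀ v, {a : E | s a = v}.ncard ≤ 2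
  card_target_le : ∀ v, {a : E | t a = v}.ncard ≤ 2
  xor_right : ∀ α β₁ β₂, β₁ ≠ β₂ → s β₁ = t α → s β₂ = t α → Xor (R α β₁) (R α β₂)
  xor_left : ∀ α₁ α₂ β, α₁ ≠ α₂ → t α₁ = s β → t α₂ = s β → Xor (R α₁ β) (R α₂ β)
  cyclic : ∀ α β, R α β → ∃ γ, s γ = t β ∧ t γ = s α ∧ R β γ ∧ R γ α

def relPredVec [Fintype E] [DecidableEq V] (s : E → V) (R : E → E → Prop) [DecidableRel R]
    (b : E) : V → ℤ :=
  ∑ a ∈ {a | R a b}, Pi.single (s a) 1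

namespace IsGentleQP

variable {s t : E → V} {R : E → E → Prop}

theorem eq_of_rel_left (hQ : IsGentleQP s t R) {γ₁ γ₂ b : E} (h₁ : R γ₁ b) (h₂ : R γ₂ b) :
    γ₁ = γ₂ := by
  by_contra hne
  exact ((xor_iff_or_and_not_and _ _).1 (hQ.xor_left γ₁ γ₂ b hne (hQ.comp _ _ h₁)
    (hQ.comp _ _ h₂))).2 ⟨h₁, h₂⟩

theorem eq_of_rel_right (hQ : IsGentleQP s t R) {b δ₁ δ₂ : E} (h₁ : R b δ₁) (h₂ : R b δ₂) :
    δ₁ = δ₂ := by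
  by_contra hne
  exact ((xor_iff_or_and_not_and _ _).1 (hQ.xor_right b δ₁ δ₂ hne (hQ.comp _ _ h₁).symm
    (hQ.comp _ _ h₂).symm)).2 ⟨h₁, h₂⟩

theorem not_rel_left_of_isolated (hQ : IsGentleQP s t R) (hloop : ∀ a, s a ≠ t a) {a b : E}
    (hR : ¬R a b) (honly : ∀ c, s c = t a ∨ t c = t a → c = a ∨ c = b) (γ : E) : ¬R γ a := by
  intro hγ
  obtain ⟨c, hc, -, hac, -⟩ := hQ.cyclic γ a hγ
  rcases honly c (Or.inl hc) with rfl | rfl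
  exacts [hloop c hc, hR hac]

theorem not_rel_right_of_isolated (hQ : IsGentleQP s t R) (hloop : ∀ a, s a ≠ t a) {a b : E}
    (hab : t a = s b) (hR : ¬R a b) (honly : ∀ c, s c = t a ∨ t c = t a → c = a ∨ c = b)
    (δ : E) : ¬R b δ := by
  intro hδ
  obtain ⟨c, -, hc, -, hcb⟩ := hQ.cyclic b δ hδ
  rcases honly c (Or.inr (hc.trans hab.symm)) with rfl | rfl
  exacts [hR hcb, hloop c hc.symm]

variable [Fintype E] [DecidableEq V] [DecidableRel R]

theorem relPredVec_eq (hQ : IsGentleQP s t R) (b : E) :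
    relPredVec s R b = ∑ a ∈ {a | R b a}, Pi.single (t a) 1 := by
  by_cases h : ∃ γ, R γ b
  · obtain ⟨γ, hγ⟩ := h
    obtain ⟨δ, -, htδ, hδ, -⟩ := hQ.cyclic γ b hγ
    have hpred : ({a | R a b} : Finset E) = {γ} :=
      eq_singleton_iff_unique_mem.2 ⟨by simpa using hγ, fun x hx =>
        hQ.eq_of_rel_left (by simpa using hx) hγ⟩
    have hsucc : ({a | R b a} : Finset E) = {δ} :=
      eq_singleton_iff_unique_mem.2 ⟨by simpa using hδ, fun x hx =>
        hQ.eq_of_rel_right (by simpa using hx) hδ⟩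
    rw [relPredVec, hpred, hsucc, sum_singleton, sum_singleton, htδ]
  · push Not at h
    have hsucc : ∀ δ, ¬R b δ := fun δ hδ =>
      let ⟨γ, _, _, _, hγ⟩ := hQ.cyclic b δ hδ; h γ hγ
    simp [relPredVec, h, hsucc]

theorem filter_target_eq_of_not_rel (hQ : IsGentleQP s t R) {b b' : E} (hne : b' ≠ b)
    (hs : s b' = s b) (h : ∀ γ, ¬R γ b') :
    ({a | t a = s b} : Finset E) = ({a | R a b} : Finset E) := by
  ext γ
  simp only [mem_filter_univ]
  exact ⟨fun hγ => (hQ.xor_right γ b b' hne.symm hγ.symm (hs.trans hγ.symm)).or.resolve_right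
    (h γ), hQ.comp _ _⟩

theorem filter_source_eq_of_not_rel (hQ : IsGentleQP s t R) {α α' : E} (hne : α' ≠ α)
    (ht : t α' = t α) (h : ∀ δ, ¬R α' δ) :
    ({a | s a = t α} : Finset E) = ({a | R α a} : Finset E) := by
  ext δ
  simp only [mem_filter_univ]
  exact ⟨fun hδ => (hQ.xor_left α α' δ hne.symm hδ.symm (ht.trans hδ.symm)).or.resolve_right
    (h δ), fun hδ => (hQ.comp _ _ hδ).symm⟩

variable [DecidableEq E]

theorem filter_target_eq_insert (hQ : IsGentleQP s t R) {α b : E} (hαb : t α = s b)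
    (hR : ¬R α b) : ({a | t a = s b} : Finset E) = insert α ({a | R a b} : Finset E) := by
  ext γ
  simp only [mem_filter_univ, mem_insert]
  constructor
  · intro hγ
    by_cases hγα : γ = α
    · exact Or.inl hγα
    · exact Or.inr ((hQ.xor_left γ α b hγα hγ hαb).or.resolve_right hR)
  · rintro (rfl | hγ)
    exacts [hαb, hQ.comp _ _ hγ]

theorem filter_source_eq_insert (hQ : IsGentleQP s t R) {α b : E} (hαb : t α = s b)
    (hR : ¬R α b) : ({a | s a = t α} : Finset E) = insert b ({a | R α a} : Finset E) := by
  ext δ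
  simp only [mem_filter_univ, mem_insert]
  constructor
  · intro hδ
    by_cases hδb : δ = b
    · exact Or.inl hδb
    · exact Or.inr ((hQ.xor_right α δ b hδb hδ hαb.symm).or.resolve_right hR)
  · rintro (rfl | hδ)
    exacts [hαb.symm, (hQ.comp _ _ hδ).symm]

theorem signedAdjMatrix_col_of_not_rel (hQ : IsGentleQP s t R) {α b : E} (hαb : t α = s b)
    (hR : ¬R α b) :
    (fun i => signedAdjMatrix s t i (s b)) =
      Pi.single (t b) 1 - Pi.single (s α) 1 + relPredVec s R α - relPredVec s R b := by
  rw [signedAdjMatrix_col, ← hαb, hQ.filter_source_eq_insert hαb hR, hαb,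
    hQ.filter_target_eq_insert hαb hR, sum_insert (by simpa using hR),
    sum_insert (by simpa using hR), ← hQ.relPredVec_eq, relPredVec]
  abel

theorem signedAdjMatrix_col_of_isolated_source (hQ : IsGentleQP s t R) (hloop : ∀ a, s a ≠ t a)
    {a b b₁ : E} (hR : ¬R a b) (honly : ∀ c, s c = t a ∨ t c = t a → c = a ∨ c = b)
    (hne : a ≠ b₁) (hs : s a = s b₁) :
    (fun i => signedAdjMatrix s t i (s b₁)) =
      Pi.single (t b₁) 1 - relPredVec s R b₁ + Pi.single (t a) 1 := by
  rw [signedAdjMatrix_col, hQ.filter_target_eq_of_not_rel hne hs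
      (hQ.not_rel_left_of_isolated hloop hR honly),
    filter_univ_eq_pair_of_ncard_le_two (hQ.card_source_le _) hne.symm rfl hs,
    sum_pair hne.symm, relPredVec]
  abel

theorem signedAdjMatrix_col_of_isolated_target (hQ : IsGentleQP s t R) (hloop : ∀ a, s a ≠ t a)
    {a b α : E} (hab : t a = s b) (hR : ¬R a b)
    (honly : ∀ c, s c = t a ∨ t c = t a → c = a ∨ c = b) (hne : b ≠ α) (ht : t b = t α) :
    (fun i => signedAdjMatrix s t i (t α)) =
      relPredVec s R α - Pi.single (s α) 1 - Pi.single (s b) 1 := by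
  rw [signedAdjMatrix_col, hQ.filter_source_eq_of_not_rel hne ht
      (hQ.not_rel_right_of_isolated hloop hab hR honly), ← hQ.relPredVec_eq,
    filter_univ_eq_pair_of_ncard_le_two (hQ.card_target_le _) hne.symm rfl ht,
    sum_pair hne.symm]
  abel

end IsGentleQP

end Gentle

theorem gentle_QP_almost_bypass_column_identity_general
    (V E : Type*) [DecidableEq V] [Fintype E]
    (s t : E → V)
    (hloop : ∀ a : E, s a ≠ t a)
    (R : E → E → Prop)
    (hRcomp : ∀ a b : E, R a b → t a = s b)
    (hG1s : ∀ v : V, {a : E | s a = v}.ncard ≤ 2)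
    (hG1t : ∀ v : V, {a : E | t a = v}.ncard ≤ 2)
    (hG2 : ∀ α β₁ β₂ : E, β₁ ≠ β₂ → s β₁ = t α → s β₂ = t α → Xor' (R α β₁) (R α β₂))
    (hG3 : ∀ α₁ α₂ β : E, α₁ ≠ α₂ → t α₁ = s β → t α₂ = s β → Xor' (R α₁ β) (R α₂ β))
    (hcyc : ∀ α β : E, R α β → ∃ γ : E, s γ = t β ∧ t γ = s α ∧ R β γ ∧ R γ α)
    (m : ℕ) (hm : 2 ≤ m) (β : ℕ → E)
    (hpath : ∀ i, 1 ≤ i → i ≤ m - 2 → t (β i) = s (β (i + 1)))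
    (hnoR : ∀ i, 1 ≤ i → i ≤ m - 2 → ¬ R (β i) (β (i + 1)))
    (hne1 : β m ≠ β 1)
    (hne4 : β (m + 1) ≠ β (m - 1))
    (hcomp : t (β m) = s (β (m + 1)))
    (hnoR2 : ¬ R (β m) (β (m + 1)))
    (hsm : s (β m) = s (β 1)) (htm : t (β (m + 1)) = t (β (m - 1)))
    (honly : ∀ a : E, s a = t (β m) ∨ t a = t (β m) → a = β m ∨ a = β (m + 1)) :
    (∑ k ∈ Finset.Icc 1 m, (fun i : V =>
        (({a : E | s a = (if k = m then t (β (m - 1)) else s (β k)) ∧ t a = i}.ncard : ℤ) -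
         ({a : E | s a = i ∧ t a = (if k = m then t (β (m - 1)) else s (β k))}.ncard : ℤ))))
      = Pi.single (t (β (m - 1))) (1 : ℤ) - Pi.single (s (β 1)) 1 := by
  classical
  have hQ : IsGentleQP s t R := ⟨hRcomp, hG1s, hG1t, hG2, hG3, hcyc⟩
  obtain ⟨n, rfl⟩ : ∃ n, m = n + 1 := ⟨m - 1, by omega⟩
  simp only [Nat.add_sub_cancel] at hne4 htm ⊢
  set j : ℕ → V := fun k => if k = n + 1 then t (β n) else s (β k)
  have hj_src : ∀ k, k ≤ n → j k = s (β k) := fun k hk => if_neg (by omega)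
  have hj_last : j (n + 1) = t (β n) := if_pos rfl
  have hj_tgt : ∀ k, 1 ≤ k → k ≤ n → t (β k) = j (k + 1) := by
    intro k hk hkn
    rcases hkn.eq_or_lt with rfl | hlt
    · exact hj_last.symm
    · rw [hj_src _ hlt, hpath k hk (by omega)]
  change ∑ k ∈ Icc 1 (n + 1), (fun i => signedAdjMatrix s t i (j k)) = _
  rw [sum_Icc_eq_sub_of_two_step_telescope (by omega) _ (fun k => Pi.single (j k) 1)
    (fun k => relPredVec s R (β k)) (Pi.single (t (β (n + 1))) 1)]
  · rw [hj_last, hj_src 1 (by omega)]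
  · rw [hj_src 1 (by omega), ← hj_tgt 1 le_rfl (by omega),
      hQ.signedAdjMatrix_col_of_isolated_source hloop hnoR2 honly hne1 hsm]
  · intro k hk hkn
    obtain ⟨i, rfl⟩ : ∃ i, k = i + 1 := ⟨k - 1, by omega⟩
    have hpath_i := hpath i (by omega) (by omega)
    simp only [Nat.add_sub_cancel]
    rw [hj_src _ hkn, ← hj_tgt _ (by omega) hkn, hj_src i (by omega),
      hQ.signedAdjMatrix_col_of_not_rel hpath_i (hnoR i (by omega) (by omega))]
  · rw [hj_last, hj_src n le_rfl, hQ.signedAdjMatrix_col_of_isolated_target hloop hcomp hnoR2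
      honly hne4 htm, hcomp]

/-- Almost-bypass column identity for gentle quivers with potential: if `β₁ ⋯ β_{m-1}` is a
path avoiding the relations and `β_m, β_{m+1}` form an almost bypass (their composite vertex
meets no other arrow), then the columns of the signed adjacency matrix at the vertices
`j₁ = s(β₁), …, j_{m-1} = s(β_{m-1}), j_m = t(β_{m-1})` sum to `e_{j_m} - e_{j_1}`. -/
theorem gentle_QP_almost_bypass_column_identity
    (V E : Type*) [DecidableEq V] [Fintype E]
    (s t : E → V)
    (hloop : ∀ a : E, s a ≠ t a)
    (R : E → E → Prop)
    (hRcomp : ∀ a b : E, R a b → t a = s b)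
    (hG1s : ∀ v : V, {a : E | s a = v}.ncard ≤ 2)
    (hG1t : ∀ v : V, {a : E | t a = v}.ncard ≤ 2)
    (hG2 : ∀ α β₁ β₂ : E, β₁ ≠ β₂ → s β₁ = t α → s β₂ = t α → Xor' (R α β₁) (R α β₂))
    (hG3 : ∀ α₁ α₂ β : E, α₁ ≠ α₂ → t α₁ = s β → t α₂ = s β → Xor' (R α₁ β) (R α₂ β))
    (hcyc : ∀ α β : E, R α β → ∃ γ : E, s γ = t β ∧ t γ = s α ∧ R β γ ∧ R γ α)
    (m : ℕ) (hm : 2 ≤ m) (β : ℕ → E)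
    (hpath : ∀ i, 1 ≤ i → i ≤ m - 2 → t (β i) = s (β (i + 1)))
    (hnoR : ∀ i, 1 ≤ i → i ≤ m - 2 → ¬ R (β i) (β (i + 1)))
    (hne1 : β m ≠ β 1) (hne2 : β m ≠ β (m - 1))
    (hne3 : β (m + 1) ≠ β 1) (hne4 : β (m + 1) ≠ β (m - 1))
    (hcomp : t (β m) = s (β (m + 1)))
    (hnoR2 : ¬ R (β m) (β (m + 1)))
    (hsm : s (β m) = s (β 1)) (htm : t (β (m + 1)) = t (β (m - 1)))
    (honly : ∀ a : E, s a = t (β m) ∨ t a = t (β m) → a = β m ∨ a = β (m + 1)) :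
    (∑ k ∈ Finset.Icc 1 m, (fun i : V =>
        (({a : E | s a = (if k = m then t (β (m - 1)) else s (β k)) ∧ t a = i}.ncard : ℤ) -
         ({a : E | s a = i ∧ t a = (if k = m then t (β (m - 1)) else s (β k))}.ncard : ℤ))))
      = Pi.single (t (β (m - 1))) (1 : ℤ) - Pi.single (s (β 1)) 1 :=
  gentle_QP_almost_bypass_column_identity_general V E s t hloop R hRcomp hG1s hG1t hG2 hG3 hcyc m hm
    β hpath hnoR hne1 hne4 hcomp hnoR2 hsm htm honly
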